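/- Minimum-time certainty-equivalent bound: in the unit-cost SSP setting with ‖V − H*‖∞ ≤ ε, model-mismatch constant δ, certainty-equivalent policy π_CE proper from x, and 2(ε + δ) < 1, the expected hitting time under π_CE satisfies E[τ] ≤ H*(x) / (1 − 2(ε + δ)). -/

import Mathlib

open MeasureTheory ProbabilityTheory Filter
open scoped ENNReal

open Classical in
/-- Bellman operator of the SSP: `(T V)(x) = inf_{u ∈ U(x)} ( f(x,u) + ∫ V(F(x,u,w)) dμ(w) )`
for nonterminal `x`, and `(T V)(t) = 0`. -/
noncomputable def bellman {X U W : Type*} [MeasurableSpace W] (μ : Measure W)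
    (t : X) (Ua : X → Set U) (f : X → U → ℝ) (F : X → U → W → X)
    (V : X → ℝ) (x : X) : ℝ :=
  if x = t then 0 else ⨅ u : Ua x, (f x (u : U) + ∫ w, V (F x (u : U) w) ∂μ)

/-- Closed-loop trajectory driven by a disturbance sequence `ω : ℕ → W`:
`x₀ = x`, `x_{k+1} = F(x_k, π(x_k), ω_k)`. -/
def traj {X U W : Type*} (F : X → U → W → X) (π : X → U) (x : X) (ω : ℕ → W) : ℕ → X
  | 0 => x
  | k + 1 => F (traj F π x ω k) (π (traj F π x ω k)) (ω k)

/-- The trajectory as a family of random variables on an abstract sample space `Ω`,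
given the disturbance random variables `ξ k : Ω → W`. -/
def trajOn {X U W Ω : Type*} (F : X → U → W → X) (π : X → U) (x : X)
    (ξ : ℕ → Ω → W) (k : ℕ) (ω : Ω) : X :=
  traj F π x (fun i => ξ i ω) k

/-- Hitting time `τ = inf { k ≥ 0 : x_k = t }` of the terminal state (`∞` if never reached),
valued in `ℝ≥0∞`. -/
noncomputable def hitTime {X Ω : Type*} (t : X) (Y : ℕ → Ω → X) (ω : Ω) : ℝ≥0∞ :=
  ⨅ (k : ℕ) (_ : Y k ω = t), (k : ℝ≥0∞)

/-- Total expected cost `J = E[ Σ_{k=0}^{τ-1} f(x_k, π(x_k)) ]` (in `ℝ≥0∞`; the stage cost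
is nonnegative). -/
noncomputable def totalCost {X U Ω : Type*} [MeasurableSpace Ω] (P : Measure Ω)
    (t : X) (f : X → U → ℝ) (π : X → U) (Y : ℕ → Ω → X) : ℝ≥0∞ :=
  ∫⁻ ω, ∑' (k : ℕ), (if (k : ℝ≥0∞) < hitTime t Y ω
    then ENNReal.ofReal (f (Y k ω) (π (Y k ω))) else 0) ∂P

/-- Expected hitting time `E[τ]` (in `ℝ≥0∞`). -/
noncomputable def expHit {X Ω : Type*} [MeasurableSpace Ω] (P : Measure Ω)
    (t : X) (Y : ℕ → Ω → X) : ℝ≥0∞ :=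
  ∫⁻ ω, hitTime t Y ω ∂P

/-! `H*` is a Lyapunov function for the certainty-equivalent closed loop. At a nonterminal state,
comparing the greedy nominal lookahead with the Bellman equation `H* = T H*` loses at most
`2(ε + δ)`, so `H*` drops in expectation by at least `c = 1 - 2(ε + δ)` at every step spent off
`t`. Telescoping gives `c · ∑_{k<n} P(x_k ≠ t) ≤ H*(x) - E[H*(x_n)] ≤ H*(x)`, because `H* ≥ 0`,
and `E[τ] ≤ ∑_k P(x_k ≠ t)`. -/

lemma nonneg_of_min_zero_add_one_lowerBound {X : Type*} {h : X → ℝ} {C : ℝ} (hC : ∀ z, -C ≤ h z)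
    (hstep : ∀ m, (∀ z, m ≤ h z) → ∀ z, min 0 (m + 1) ≤ h z) (z : X) : 0 ≤ h z := by
  have hbound : ∀ n : ℕ, ∀ z, min 0 (n - C) ≤ h z := by
    intro n
    induction n with
    | zero => simpa using fun z => (min_le_right 0 (-C)).trans (hC z)
    | succ n ih =>
      refine fun z => le_trans ?_ (hstep _ ih z)
      push_cast
      rw [← min_add_add_right]
      exact le_min (min_le_left _ _) (by simp [add_sub_right_comm])
  simpa [sub_nonneg.mpr (Nat.le_ceil C)] using hbound ⌈C⌉₊ z

lemma abs_integral_sub_integral_le {α : Type*} [MeasurableSpace α] {μ : Measure α}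
    [IsProbabilityMeasure μ] {f g : α → ℝ} (hf : Integrable f μ) (hg : Integrable g μ) {ε : ℝ}
    (hfg : ∀ a, |f a - g a| ≤ ε) : |∫ a, f a ∂μ - ∫ a, g a ∂μ| ≤ ε := by
  rw [← integral_sub hf hg]
  simpa using
    norm_integral_le_of_norm_le_const (μ := μ) (f := fun a => f a - g a) (ae_of_all _ hfg)

section Trajectory

variable {X U W : Type*} (F : X → U → W → X) (π : X → U) (x : X)

lemma traj_congr {ω ω' : ℕ → W} :
    ∀ k, (∀ i < k, ω i = ω' i) → traj F π x ω k = traj F π x ω' k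
  | 0, _ => rfl
  | k + 1, h => by
    simp only [traj, traj_congr k fun i hi => h i (hi.trans k.lt_succ_self), h k k.lt_succ_self]

variable [MeasurableSpace X] [MeasurableSpace U] [MeasurableSpace W] {F π}

lemma measurable_traj (hF : Measurable fun p : X × U × W => F p.1 p.2.1 p.2.2)
    (hπ : Measurable π) : ∀ k, Measurable fun ω : ℕ → W => traj F π x ω k
  | 0 => measurable_const
  | k + 1 => by
    have ih := measurable_traj hF hπ k
    exact hF.comp (ih.prodMk ((hπ.comp ih).prodMk (measurable_pi_apply k)))

variable {Ω : Type*} [MeasurableSpace Ω] {P : Measure Ω} {ξ : ℕ → Ω → W}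

lemma measurable_trajOn (hF : Measurable fun p : X × U × W => F p.1 p.2.1 p.2.2)
    (hπ : Measurable π) (hξ : ∀ k, Measurable (ξ k)) (k : ℕ) :
    Measurable (trajOn F π x ξ k) :=
  (measurable_traj x hF hπ k).comp (measurable_pi_lambda _ hξ)

-- The state at time `k` is a function of the first `k` disturbances only.
lemma indepFun_trajOn [Nonempty W] (hF : Measurable fun p : X × U × W => F p.1 p.2.1 p.2.2)
    (hπ : Measurable π) (hξ : ∀ k, Measurable (ξ k)) (hindep : iIndepFun ξ P) (k : ℕ) :
    IndepFun (trajOn F π x ξ k) (ξ k) P := by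
  classical
  let past : (Finset.range k → W) → X := fun v =>
    traj F π x (fun i => if h : i ∈ Finset.range k then v ⟨i, h⟩ else Classical.arbitrary W) k
  have hpast : Measurable past := by
    refine (measurable_traj x hF hπ k).comp (measurable_pi_lambda _ fun i => ?_)
    by_cases h : i ∈ Finset.range k
    · simpa only [h, dif_pos] using measurable_pi_apply _
    · simp only [h, dif_neg, not_false_iff, measurable_const]
  have hsplit := (hindep.indepFun_finset (Finset.range k) {k} (by simp) hξ).comp hpast
    (measurable_pi_apply (⟨k, Finset.mem_singleton_self k⟩ : ({k} : Finset ℕ)))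
  refine hsplit.congr (ae_of_all _ fun ω => ?_) (ae_of_all _ fun _ => rfl)
  exact traj_congr F π x k fun i hi => by simp [Finset.mem_range.mpr hi]

end Trajectory

lemma ProbabilityTheory.IndepFun.integral_comp_eq_integral_integral
    {Ω X W : Type*} [MeasurableSpace Ω] [MeasurableSpace X] [MeasurableSpace W]
    {P : Measure Ω} [IsProbabilityMeasure P] {μ : Measure W} [IsProbabilityMeasure μ]
    {Y : Ω → X} {Z : Ω → W} (hYZ : IndepFun Y Z P) (hY : Measurable Y) (hZ : Measurable Z)
    (hZμ : P.map Z = μ) {φ : X × W → ℝ} (hφ : Measurable φ) {C : ℝ} (hC : ∀ p, |φ p| ≤ C) :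
    ∫ ω, φ (Y ω, Z ω) ∂P = ∫ ω, ∫ w, φ (Y ω, w) ∂μ ∂P := by
  have : IsProbabilityMeasure (P.map Y) := Measure.isProbabilityMeasure_map hY.aemeasurable
  have hint : Integrable φ ((P.map Y).prod μ) :=
    (integrable_const C).mono' hφ.aestronglyMeasurable (ae_of_all _ hC)
  calc ∫ ω, φ (Y ω, Z ω) ∂P = ∫ p, φ p ∂(P.map fun ω => (Y ω, Z ω)) :=
        (integral_map (hY.prodMk hZ).aemeasurable hφ.aestronglyMeasurable).symm
    _ = ∫ p, φ p ∂((P.map Y).prod μ) := by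
        rw [hYZ.map_prod_eq_prod_map_map hY.aemeasurable hZ.aemeasurable, hZμ]
    _ = ∫ y, ∫ w, φ (y, w) ∂μ ∂(P.map Y) := integral_prod φ hint
    _ = ∫ ω, ∫ w, φ (Y ω, w) ∂μ ∂P :=
        integral_map hY.aemeasurable hφ.stronglyMeasurable.integral_prod_right'.aestronglyMeasurable

section ClosedLoop

variable {X U W Ω : Type*} [MeasurableSpace X] [MeasurableSpace U] [MeasurableSpace W]
  [MeasurableSpace Ω] [Nonempty W] {F : X → U → W → X} {π : X → U}
  {μ : Measure W} [IsProbabilityMeasure μ] {P : Measure Ω} [IsProbabilityMeasure P]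
  {ξ : ℕ → Ω → W} {φ : X → ℝ} {C : ℝ}

lemma integral_trajOn_succ (hF : Measurable fun p : X × U × W => F p.1 p.2.1 p.2.2)
    (hπ : Measurable π) (hξ : ∀ k, Measurable (ξ k)) (hindep : iIndepFun ξ P)
    (hlaw : ∀ k, P.map (ξ k) = μ) (hφ : Measurable φ) (hC : ∀ y, |φ y| ≤ C) (x : X) (k : ℕ) :
    ∫ ω, φ (trajOn F π x ξ (k + 1) ω) ∂P =
      ∫ ω, ∫ w, φ (F (trajOn F π x ξ k ω) (π (trajOn F π x ξ k ω)) w) ∂μ ∂P :=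
  (indepFun_trajOn x hF hπ hξ hindep k).integral_comp_eq_integral_integral
    (φ := fun p => φ (F p.1 (π p.1) p.2)) (measurable_trajOn x hF hπ hξ k) (hξ k) (hlaw k)
    (hφ.comp (hF.comp (measurable_fst.prodMk ((hπ.comp measurable_fst).prodMk measurable_snd))))
    fun _ => hC _

lemma mul_sum_measureReal_le_of_drift
    (hF : Measurable fun p : X × U × W => F p.1 p.2.1 p.2.2)
    (hπ : Measurable π) (hξ : ∀ k, Measurable (ξ k)) (hindep : iIndepFun ξ P)
    (hlaw : ∀ k, P.map (ξ k) = μ) (hφ : Measurable φ) (hC : ∀ y, |φ y| ≤ C)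
    {s : Set X} (hs : MeasurableSet s) {c : ℝ}
    (hdrift : ∀ y, ∫ w, φ (F y (π y) w) ∂μ + s.indicator (fun _ => c) y ≤ φ y) (x : X) (n : ℕ) :
    c * ∑ k ∈ Finset.range n, P.real (trajOn F π x ξ k ⁻¹' s) ≤
      φ x - ∫ ω, φ (trajOn F π x ξ n ω) ∂P := by
  induction n with
  | zero => simp [trajOn, traj]
  | succ n ih =>
    set Y := trajOn F π x ξ n
    have hY : Measurable Y := measurable_trajOn x hF hπ hξ n
    have hbdd : ∀ {ψ : X → ℝ}, Measurable ψ → (∀ y, |ψ y| ≤ C) →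
        Integrable (fun ω => ψ (Y ω)) P :=
      fun hψ hψC => (integrable_const C).mono' (hψ.comp hY).aestronglyMeasurable
        (ae_of_all _ fun ω => hψC (Y ω))
    have hind : Integrable ((Y ⁻¹' s).indicator fun _ => c) P :=
      (integrable_const c).indicator (hY hs)
    have hstep : ∫ ω, φ (trajOn F π x ξ (n + 1) ω) ∂P ≤
        ∫ ω, φ (Y ω) ∂P - c * P.real (Y ⁻¹' s) := by
      have hg : Measurable fun y => ∫ w, φ (F y (π y) w) ∂μ :=
        (hφ.comp (hF.comp (measurable_fst.prodMk ((hπ.comp measurable_fst).prodMk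
          measurable_snd)))).stronglyMeasurable.integral_prod_right'.measurable
      have hgC : ∀ y, |∫ w, φ (F y (π y) w) ∂μ| ≤ C := fun y => by
        simpa using norm_integral_le_of_norm_le_const (μ := μ) (f := fun w => φ (F y (π y) w))
          (ae_of_all _ fun w => hC _)
      calc ∫ ω, φ (trajOn F π x ξ (n + 1) ω) ∂P
          = ∫ ω, ∫ w, φ (F (Y ω) (π (Y ω)) w) ∂μ ∂P :=
            integral_trajOn_succ hF hπ hξ hindep hlaw hφ hC x n
        _ ≤ ∫ ω, (φ (Y ω) - (Y ⁻¹' s).indicator (fun _ => c) ω) ∂P :=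
            integral_mono (hbdd hg hgC) ((hbdd hφ hC).sub hind) fun ω =>
              le_sub_iff_add_le.mpr (hdrift (Y ω))
        _ = ∫ ω, φ (Y ω) ∂P - c * P.real (Y ⁻¹' s) := by
            rw [integral_sub (hbdd hφ hC) hind, integral_indicator_const c (hY hs), smul_eq_mul,
              mul_comm]
    rw [Finset.sum_range_succ, mul_add]
    linarith

end ClosedLoop

lemma sum_measure_le_ofReal_div {Ω : Type*} [MeasurableSpace Ω] {P : Measure Ω}
    [IsFiniteMeasure P] {A : ℕ → Set Ω} {n : ℕ} {b c : ℝ} (hc : 0 < c)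
    (h : c * ∑ k ∈ Finset.range n, P.real (A k) ≤ b) :
    ∑ k ∈ Finset.range n, P (A k) ≤ ENNReal.ofReal (b / c) :=
  calc ∑ k ∈ Finset.range n, P (A k) = ENNReal.ofReal (∑ k ∈ Finset.range n, P.real (A k)) := by
        rw [ENNReal.ofReal_sum_of_nonneg fun _ _ => measureReal_nonneg]
        simp
    _ ≤ ENNReal.ofReal (b / c) :=
        ENNReal.ofReal_le_ofReal ((le_div_iff₀ hc).mpr (by linarith))

-- `τ` counts the steps before the first visit to `t`, each of which is a step spent off `t`.
lemma hitTime_le_tsum_indicator {X Ω : Type*} (t : X) (Y : ℕ → Ω → X) (ω : Ω) :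
    hitTime t Y ω ≤ ∑' k, (Y k ⁻¹' {t}ᶜ).indicator 1 ω := by
  classical
  by_cases hhit : ∃ k, Y k ω = t
  · calc hitTime t Y ω ≤ (Nat.find hhit : ℝ≥0∞) :=
        iInf₂_le (f := fun k (_ : Y k ω = t) => (k : ℝ≥0∞)) _ (Nat.find_spec hhit)
      _ = ∑ k ∈ Finset.range (Nat.find hhit), (Y k ⁻¹' {t}ᶜ).indicator 1 ω := by
        rw [Finset.sum_congr rfl fun k hk => Set.indicator_of_mem
          (Nat.find_min hhit (Finset.mem_range.mp hk)) 1]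
        simp
      _ ≤ ∑' k, (Y k ⁻¹' {t}ᶜ).indicator 1 ω := ENNReal.sum_le_tsum _
  · push Not at hhit
    have hoff : ∀ k, (Y k ⁻¹' {t}ᶜ).indicator (1 : Ω → ℝ≥0∞) ω = 1 :=
      fun k => Set.indicator_of_mem (hhit k) 1
    simp only [hoff, ENNReal.tsum_const_eq_top_of_ne_zero one_ne_zero, le_top]

lemma expHit_le_tsum_measure {X Ω : Type*} [MeasurableSpace X] [MeasurableSingletonClass X]
    [MeasurableSpace Ω] (P : Measure Ω) (t : X) {Y : ℕ → Ω → X} (hY : ∀ k, Measurable (Y k)) :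
    expHit P t Y ≤ ∑' k, P (Y k ⁻¹' {t}ᶜ) :=
  calc expHit P t Y ≤ ∫⁻ ω, ∑' k, (Y k ⁻¹' {t}ᶜ).indicator 1 ω ∂P :=
        lintegral_mono (hitTime_le_tsum_indicator t Y)
    _ = ∑' k, P (Y k ⁻¹' {t}ᶜ) := by
        rw [lintegral_tsum fun k => (measurable_one.indicator
          (hY k (measurableSet_singleton t).compl)).aemeasurable]
        exact tsum_congr fun k => lintegral_indicator_one (hY k (measurableSet_singleton t).compl)

section Bellman

variable {X U W : Type*} [MeasurableSpace W] {μ : Measure W} [IsProbabilityMeasure μ] {t : X}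
  {Ua : X → Set U} {f : X → U → ℝ} {F : X → U → W → X} {H : X → ℝ}

-- A lower bound `m` of `H` propagates to `min 0 (m + 1)` through `H = T H`; iterating from
-- `-C` reaches `0` after `⌈C⌉` steps.
lemma nonneg_of_eq_bellman (hUne : ∀ y, (Ua y).Nonempty) (hf1 : ∀ y u, y ≠ t → f y u = 1)
    (hHint : ∀ y u, Integrable (fun w => H (F y u w)) μ) {C : ℝ} (hC : ∀ y, |H y| ≤ C)
    (hfix : ∀ y, H y = bellman μ t Ua f F H y) (y : X) : 0 ≤ H y := by
  refine nonneg_of_min_zero_add_one_lowerBound (fun z => neg_le_of_abs_le (hC z))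
    (fun m hm z => ?_) y
  rw [hfix z, bellman]
  split_ifs with hz
  · exact min_le_left _ _
  · have : Nonempty (Ua z) := (hUne z).to_subtype
    refine (min_le_right _ _).trans (le_ciInf fun u => ?_)
    have hmean : m ≤ ∫ w, H (F z u w) ∂μ := by
      simpa using integral_mono (integrable_const m) (hHint z u) fun w => hm _
    rw [hf1 z u hz]
    linarith

-- The greedy choice for the nominal lookahead loses `ε` twice (from `V` to `H` and back) and
-- `δ` twice (from the nominal to the expected lookahead and back).
lemma cost_add_integral_le_bellman_add {V : X → ℝ} {ε δ : ℝ} {wbar : W} {y : X} {u₀ : U}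
    (hy : y ≠ t) (hne : (Ua y).Nonempty)
    (hHint : ∀ u, Integrable (fun w => H (F y u w)) μ)
    (hVint : ∀ u, Integrable (fun w => V (F y u w)) μ) (happrox : ∀ z, |V z - H z| ≤ ε)
    (hδ : ∀ u ∈ Ua y, |∫ w, V (F y u w) ∂μ - V (F y u wbar)| ≤ δ) (hu₀ : u₀ ∈ Ua y)
    (hgreedy : ∀ u ∈ Ua y, f y u₀ + V (F y u₀ wbar) ≤ f y u + V (F y u wbar)) :
    f y u₀ + ∫ w, H (F y u₀ w) ∂μ ≤ bellman μ t Ua f F H y + 2 * (ε + δ) := by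
  have : Nonempty (Ua y) := hne.to_subtype
  rw [bellman, if_neg hy, ← sub_le_iff_le_add]
  refine le_ciInf fun u => ?_
  have hH₀ := abs_le.mp (abs_integral_sub_integral_le (hHint u₀) (hVint u₀)
    fun w => (abs_sub_comm _ _).trans_le (happrox _))
  have hHu := abs_le.mp (abs_integral_sub_integral_le (hVint u) (hHint u) fun w => happrox _)
  have hδ₀ := abs_le.mp (hδ u₀ hu₀)
  have hδu := abs_le.mp (hδ u u.2)
  linarith [hgreedy u u.2]

end Bellman

theorem min_time_certainty_equivalent_bound_general
    {X U W Ω : Type*} [MeasurableSpace X] [MeasurableSingletonClass X]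
    [MeasurableSpace U] [MeasurableSpace W] [MeasurableSpace Ω]
    (μ : Measure W) [IsProbabilityMeasure μ] (P : Measure Ω) [IsProbabilityMeasure P]
    (t : X) (u0 : U) (Ua : X → Set U) (F : X → U → W → X) (f : X → U → ℝ)
    -- SSP model: nonempty control sets, nonnegative measurable stage cost, measurable dynamics,
    -- absorbing cost-free terminal state
    (hUne : ∀ y, (Ua y).Nonempty)
    (hFmeas : Measurable fun p : X × U × W => F p.1 p.2.1 p.2.2)
    (hFt : ∀ w, F t u0 w = t)
    -- unit stage cost: f ≡ 1 off the terminal state, f(t,·) = 0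
    (hf1 : ∀ y u, y ≠ t → f y u = 1)
    -- H* : the bounded minimum expected hitting time, H*(t) = 0, fixed point of T
    (Hstar : X → ℝ) (hHmeas : Measurable Hstar) (hHbdd : ∃ C, ∀ y, |Hstar y| ≤ C)
    (hHfix : ∀ y, Hstar y = bellman μ t Ua f F Hstar y)
    (hHint : ∀ y u, Integrable (fun w => Hstar (F y u w)) μ)
    -- V : bounded surrogate with V(t)=0 and ‖V - H*‖∞ ≤ ε
    (V : X → ℝ)
    (hVint : ∀ y u, Integrable (fun w => V (F y u w)) μ)
    (ε : ℝ) (happrox : ∀ y, |V y - Hstar y| ≤ ε)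
    -- model-mismatch constant δ: uniform bound on the nominal-vs-expected one-step evaluation
    (wbar : W) (δ : ℝ)
    (hδ : ∀ y, y ≠ t → ∀ u ∈ Ua y, |(∫ w, V (F y u w) ∂μ) - V (F y u wbar)| ≤ δ)
    (πCE : X → U) (hπmeas : Measurable πCE)
    -- certainty-equivalent policy: greedy for the nominal one-step lookahead, minimum attained
    (hπt : πCE t = u0)
    (hce : ∀ y, y ≠ t → πCE y ∈ Ua y ∧ ∀ u ∈ Ua y,
      f y (πCE y) + V (F y (πCE y) wbar) ≤ f y u + V (F y u wbar))
    -- i.i.d. disturbance sequence with common law μ on an abstract probability space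
    (ξ : ℕ → Ω → W) (hξmeas : ∀ k, Measurable (ξ k))
    (hξindep : iIndepFun (m := fun _ => ‹MeasurableSpace W›) ξ P)
    (hξlaw : ∀ k, P.map (ξ k) = μ)
    (x : X)
    (h2εδ : 2 * (ε + δ) < 1) :
    (expHit P t (trajOn F πCE x ξ)).toReal ≤ Hstar x / (1 - 2 * (ε + δ)) := by
  have : Nonempty W := ⟨wbar⟩
  obtain ⟨C, hC⟩ := hHbdd
  set c := 1 - 2 * (ε + δ)
  have hc : 0 < c := by linarith
  have hHnn : ∀ y, 0 ≤ Hstar y := nonneg_of_eq_bellman hUne hf1 hHint hC hHfix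
  have hdrift : ∀ y, ∫ w, Hstar (F y (πCE y) w) ∂μ + ({t}ᶜ : Set X).indicator (fun _ => c) y ≤
      Hstar y := by
    intro y
    by_cases hy : y = t
    · simp [hy, hπt, hFt]
    · have hstep := cost_add_integral_le_bellman_add hy (hUne y) (hHint y) (hVint y) happrox
        (hδ y hy) (hce y hy).1 (hce y hy).2
      rw [hf1 y _ hy, ← hHfix y] at hstep
      rw [Set.indicator_of_mem (Set.mem_compl_singleton_iff.mpr hy)]
      linarith
  have hpartial : ∀ n, ∑ k ∈ Finset.range n, P (trajOn F πCE x ξ k ⁻¹' {t}ᶜ) ≤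
      ENNReal.ofReal (Hstar x / c) := fun n =>
    sum_measure_le_ofReal_div hc <|
      (mul_sum_measureReal_le_of_drift hFmeas hπmeas hξmeas hξindep hξlaw hHmeas hC
        (measurableSet_singleton t).compl hdrift x n).trans
      (sub_le_self _ (integral_nonneg fun _ => hHnn _))
  exact ENNReal.toReal_le_of_le_ofReal (div_nonneg (hHnn x) hc.le)
    ((expHit_le_tsum_measure P t (measurable_trajOn x hFmeas hπmeas hξmeas)).trans
      (ENNReal.tsum_le_of_sum_range_le hpartial))

/-- Minimum-time certainty-equivalent bound: in the unit-cost SSP with `‖V - H*‖∞ ≤ ε`,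
model-mismatch constant `δ`, certainty-equivalent policy `π_CE` proper from `x`, and
`2(ε + δ) < 1`, the expected hitting time satisfies `E[τ] ≤ H*(x)/(1 - 2(ε + δ))`. -/
theorem min_time_certainty_equivalent_bound
    {X U W Ω : Type*} [MeasurableSpace X] [MeasurableSingletonClass X]
    [MeasurableSpace U] [MeasurableSpace W] [MeasurableSpace Ω]
    (μ : Measure W) [IsProbabilityMeasure μ] (P : Measure Ω) [IsProbabilityMeasure P]
    (t : X) (u0 : U) (Ua : X → Set U) (F : X → U → W → X) (f : X → U → ℝ)
    -- SSP model: nonempty control sets, nonnegative measurable stage cost, measurable dynamics,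
    -- absorbing cost-free terminal state
    (hUne : ∀ y, (Ua y).Nonempty) (hfnn : ∀ y u, 0 ≤ f y u)
    (hFmeas : Measurable fun p : X × U × W => F p.1 p.2.1 p.2.2)
    (hfmeas : Measurable fun p : X × U => f p.1 p.2)
    (hUt : Ua t = {u0}) (hft : f t u0 = 0) (hFt : ∀ w, F t u0 w = t)
    -- unit stage cost: f ≡ 1 off the terminal state, f(t,·) = 0
    (hf1 : ∀ y u, y ≠ t → f y u = 1) (hft0 : ∀ u, f t u = 0)
    -- H* : the bounded minimum expected hitting time, H*(t) = 0, fixed point of T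
    (Hstar : X → ℝ) (hHmeas : Measurable Hstar) (hHbdd : ∃ C, ∀ y, |Hstar y| ≤ C)
    (hHt : Hstar t = 0) (hHfix : ∀ y, Hstar y = bellman μ t Ua f F Hstar y)
    (hHint : ∀ y u, Integrable (fun w => Hstar (F y u w)) μ)
    -- V : bounded surrogate with V(t)=0 and ‖V - H*‖∞ ≤ ε
    (V : X → ℝ) (hVmeas : Measurable V) (hVbdd : ∃ C, ∀ y, |V y| ≤ C) (hVt : V t = 0)
    (hVint : ∀ y u, Integrable (fun w => V (F y u w)) μ)
    (ε : ℝ) (hε : 0 ≤ ε) (happrox : ∀ y, |V y - Hstar y| ≤ ε)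
    -- model-mismatch constant δ: uniform bound on the nominal-vs-expected one-step evaluation
    (wbar : W) (δ : ℝ)
    (hδ : ∀ y, y ≠ t → ∀ u ∈ Ua y, |(∫ w, V (F y u w) ∂μ) - V (F y u wbar)| ≤ δ)
    -- the infimum defining (T V)(y) is attained at every nonterminal y
    (hTatt : ∀ y, y ≠ t → ∃ u ∈ Ua y, ∀ u' ∈ Ua y,
      f y u + ∫ w, V (F y u w) ∂μ ≤ f y u' + ∫ w, V (F y u' w) ∂μ)
    (πCE : X → U) (hπmeas : Measurable πCE)
    -- certainty-equivalent policy: greedy for the nominal one-step lookahead, minimum attained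
    (hπt : πCE t = u0)
    (hce : ∀ y, y ≠ t → πCE y ∈ Ua y ∧ ∀ u ∈ Ua y,
      f y (πCE y) + V (F y (πCE y) wbar) ≤ f y u + V (F y u wbar))
    -- i.i.d. disturbance sequence with common law μ on an abstract probability space
    (ξ : ℕ → Ω → W) (hξmeas : ∀ k, Measurable (ξ k))
    (hξindep : iIndepFun (m := fun _ => ‹MeasurableSpace W›) ξ P)
    (hξlaw : ∀ k, P.map (ξ k) = μ)
    -- properness of the closed loop from x: τ < ∞ a.s. and E[τ] < ∞
    (x : X)
    (hproper_tau : ∀ᵐ ω ∂P, hitTime t (trajOn F πCE x ξ) ω < ⊤)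
    (hproper_Etau : expHit P t (trajOn F πCE x ξ) < ⊤)
    (h2εδ : 2 * (ε + δ) < 1) :
    (expHit P t (trajOn F πCE x ξ)).toReal ≤ Hstar x / (1 - 2 * (ε + δ)) :=
  min_time_certainty_equivalent_bound_general μ P t u0 Ua F f hUne hFmeas hFt hf1 Hstar hHmeas hHbdd
    hHfix hHint V hVint ε happrox wbar δ hδ πCE hπmeas hπt hce ξ hξmeas hξindep hξlaw x h2εδ
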